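/- Suppose k, n, m are positive integers with k ≥ 150, n − m ≥ 2, a1, a2 ∈ {1,…,9}, and Q_k = a1·(10^n−1)/9 − a2·(10^m−1)/9. Then |1 − (a1 − a2·10^{m−n})·10^n·α^{−k}/9| < 4/α^k, where α = 1 + √2. -/
import Mathlib

/-- The Pell-Lucas sequence: `Q 0 = Q 1 = 2`, `Q (n+2) = 2 * Q (n+1) + Q n`. -/
def pellLucas : ℕ → ℕ
  | 0 => 2
  | 1 => 2
  | n + 2 => 2 * pellLucas (n + 1) + pellLucas n

lemma pellLucas_formula : ∀ k : ℕ,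
    (pellLucas k : ℝ) = (1 + Real.sqrt 2) ^ k + (1 - Real.sqrt 2) ^ k
  | 0 => by norm_num [pellLucas]
  | 1 => by norm_num [pellLucas]
  | (k + 2) => by
    have h1 := pellLucas_formula (k + 1)
    have h0 := pellLucas_formula k
    have hs : Real.sqrt 2 ^ 2 = 2 := Real.sq_sqrt (by norm_num)
    show ((2 * pellLucas (k + 1) + pellLucas k : ℕ) : ℝ) = _
    push_cast [h1, h0]
    ring_nf
    nlinarith [hs, sq_nonneg ((1 + Real.sqrt 2)^k), sq_nonneg ((1 - Real.sqrt 2)^k)]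

/-- `|1 - (a1 - a2 * 10^(m-n)) * 10^n * α^(-k) / 9| < 4 / α^k` with `α = 1 + √2`. -/
theorem pellLucas_linear_form_bound_two (k n m a1 a2 : ℕ) (hk : 150 ≤ k) (hnm : m + 2 ≤ n) (hm : 1 ≤ m)
    (ha11 : 1 ≤ a1) (ha19 : a1 ≤ 9) (ha21 : 1 ≤ a2) (ha29 : a2 ≤ 9)
    (heq : (pellLucas k : ℤ) = (a1 : ℤ) * ((10 ^ n - 1) / 9) - (a2 : ℤ) * ((10 ^ m - 1) / 9)) :
    |1 - ((a1 : ℝ) - (a2 : ℝ) * (10 : ℝ) ^ ((m : ℤ) - (n : ℤ))) * 10 ^ n *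
        (1 + Real.sqrt 2) ^ (-(k : ℤ)) / 9| <
      4 / (1 + Real.sqrt 2) ^ k := by
  set α : ℝ := 1 + Real.sqrt 2 with hαdef
  set β : ℝ := 1 - Real.sqrt 2 with hβdef
  have hs2 : (1:ℝ) < Real.sqrt 2 := by
    nlinarith [Real.sq_sqrt (show (0:ℝ) ≤ 2 by norm_num), Real.sqrt_nonneg 2]
  have hs2' : Real.sqrt 2 < 2 := by
    nlinarith [Real.sq_sqrt (show (0:ℝ) ≤ 2 by norm_num), Real.sqrt_nonneg 2]
  have hα1 : (1:ℝ) < α := by rw [hαdef]; linarith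
  have hαk : (0:ℝ) < α ^ k := pow_pos (by linarith) k
  have hαkne : α ^ k ≠ 0 := ne_of_gt hαk
  have hdvd : ∀ j : ℕ, (9:ℤ) ∣ 10 ^ j - 1 := by
    intro j
    have : (10:ℤ) - 1 ∣ 10 ^ j - 1 ^ j := sub_dvd_pow_sub_pow 10 1 j
    simpa using this
  have keyZ : 9 * (pellLucas k : ℤ) = a1 * (10 ^ n - 1) - a2 * (10 ^ m - 1) := by
    obtain ⟨cn, hcn⟩ := hdvd n
    obtain ⟨cm, hcm⟩ := hdvd m
    rw [hcn, hcm] at heq ⊢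
    rw [Int.mul_ediv_cancel_left _ (by norm_num), Int.mul_ediv_cancel_left _ (by norm_num)] at heq
    linarith
  have key : 9 * ((pellLucas k : ℝ)) = a1 * (10 ^ n - 1) - a2 * (10 ^ m - 1) := by
    exact_mod_cast keyZ
  have hf := pellLucas_formula k
  have h10 : ((10:ℝ)) ^ ((m:ℤ) - (n:ℤ)) = 10 ^ m / 10 ^ n := by
    rw [zpow_sub₀ (by norm_num : (10:ℝ) ≠ 0), zpow_natCast, zpow_natCast]
  have hαz : α ^ (-(k:ℤ)) = (α ^ k)⁻¹ := by
    rw [zpow_neg, zpow_natCast]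
  have h10n : ((10:ℝ)) ^ n ≠ 0 := by positivity
  have hnum_eq : ((a1:ℝ) - (a2:ℝ) * (10 ^ m / 10 ^ n)) * 10 ^ n
      = 9 * (α ^ k + β ^ k) + ((a1:ℝ) - a2) := by
    have h1 : ((a1:ℝ) - (a2:ℝ) * (10 ^ m / 10 ^ n)) * 10 ^ n
        = (a1:ℝ) * 10 ^ n - (a2:ℝ) * 10 ^ m := by
      field_simp
    rw [h1, ← hf]
    linarith [key]
  have hE : 1 - ((a1 : ℝ) - (a2 : ℝ) * (10 : ℝ) ^ ((m : ℤ) - (n : ℤ))) * 10 ^ n *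
        α ^ (-(k : ℤ)) / 9 = (-(((a1:ℝ)) - a2) - 9 * β ^ k) / (9 * α ^ k) := by
    rw [h10, hαz]
    rw [show ((a1 : ℝ) - (a2 : ℝ) * (10 ^ m / 10 ^ n)) * 10 ^ n * (α ^ k)⁻¹
        = (((a1 : ℝ) - (a2 : ℝ) * (10 ^ m / 10 ^ n)) * 10 ^ n) * (α ^ k)⁻¹ from rfl,
      hnum_eq]
    field_simp
    ring
  rw [hE, abs_div, abs_of_pos (by positivity : (0:ℝ) < 9 * α ^ k)]
  have hβneg : β < 0 := by rw [hβdef]; linarith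
  have hβabs : |β| = Real.sqrt 2 - 1 := by rw [abs_of_neg hβneg, hβdef]; ring
  have hβk : |β ^ k| ≤ 1 := by
    rw [abs_pow, hβabs]
    exact pow_le_one₀ (by linarith) (by linarith)
  have hnum : |(-(((a1:ℝ)) - a2) - 9 * β ^ k)| < 36 := by
    have ha1r : (a1:ℝ) ≤ 9 := by exact_mod_cast ha19
    have ha2r : (a2:ℝ) ≤ 9 := by exact_mod_cast ha29
    have ha1r' : (1:ℝ) ≤ a1 := by exact_mod_cast ha11
    have ha2r' : (1:ℝ) ≤ a2 := by exact_mod_cast ha21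
    have hb := abs_le.mp hβk
    rw [abs_lt]
    constructor <;> nlinarith [hb.1, hb.2]
  calc |(-(((a1:ℝ)) - a2) - 9 * β ^ k)| / (9 * α ^ k) < 36 / (9 * α ^ k) := by
        gcongr
    _ = 4 / α ^ k := by rw [div_eq_div_iff (by positivity) (by positivity)]; ring
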